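/- arXiv:2009.07671 — 5 statements merged into one kernel-verified Lean document; each statement's English description precedes it below -/
import Mathlib

section
/- Let A_3 = ℤ³ ⧸ ⟨(28, −8, −8)⟩ be the quotient of the free abelian group ℤ³ by the (cyclic) subgroup generated by the vector (28, −8, −8). Then the class of the vector (7, −2, −2) in A_3 has order exactly 4, i.e. 4·(7,−2,−2) lies in ℤ·(28,−8,−8) but 2·(7,−2,−2) does not. -/
/-!
`(28, -8, -8) = 4 • (7, -2, -2)`, so the whole question lives on the line `ℤ • (7, -2, -2)`.
Since `ℤ³` is torsion-free and `(7, -2, -2) ≠ 0`, `m ↦ m • (7, -2, -2)` is injective, so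
`m • (7, -2, -2)` is a multiple of `4 • (7, -2, -2)` exactly when `4 ∣ m`.
-/

open QuotientAddGroup

section TorsionFree

variable {G : Type*} [AddCommGroup G] [IsAddTorsionFree G] {v : G}

theorem zsmul_mem_zmultiples_zsmul_iff (hv : v ≠ 0) (m n : ℤ) :
    m • v ∈ AddSubgroup.zmultiples (n • v) ↔ n ∣ m := by
  simp only [AddSubgroup.mem_zmultiples_iff, smul_smul, dvd_def, eq_comm (a := m), mul_comm n]
  exact exists_congr fun k => (smul_left_injective ℤ hv).eq_iff

theorem addOrderOf_mk_of_zmultiples_nsmul (hv : v ≠ 0) (n : ℕ) :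
    addOrderOf (mk v : G ⧸ AddSubgroup.zmultiples (n • v)) = n := by
  refine Nat.dvd_right_iff_eq.mp fun k => ?_
  rw [addOrderOf_dvd_iff_nsmul_eq_zero, ← mk_nsmul, eq_zero_iff, ← natCast_zsmul,
    ← natCast_zsmul, zsmul_mem_zmultiples_zsmul_iff hv, Int.natCast_dvd_natCast]

end TorsionFree

/-- The class of `(7, -2, -2)` in `ℤ³ ⧸ ⟨(28, -8, -8)⟩` has order exactly `4`:
`4 • (7,-2,-2)` lies in `ℤ • (28,-8,-8)` but `2 • (7,-2,-2)` does not. -/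
theorem stmt_0 :
    addOrderOf
      (QuotientAddGroup.mk (s := AddSubgroup.zmultiples ((28, -8, -8) : ℤ × ℤ × ℤ))
        ((7, -2, -2) : ℤ × ℤ × ℤ)) = 4 ∧
    (4 : ℤ) • ((7, -2, -2) : ℤ × ℤ × ℤ) ∈
      AddSubgroup.zmultiples ((28, -8, -8) : ℤ × ℤ × ℤ) ∧
    (2 : ℤ) • ((7, -2, -2) : ℤ × ℤ × ℤ) ∉
      AddSubgroup.zmultiples ((28, -8, -8) : ℤ × ℤ × ℤ) := by
  have hv : ((7, -2, -2) : ℤ × ℤ × ℤ) ≠ 0 := by decide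
  have h28 : ((28, -8, -8) : ℤ × ℤ × ℤ) = (4 : ℕ) • ((7, -2, -2) : ℤ × ℤ × ℤ) := by decide
  rw [h28, ← natCast_zsmul, zsmul_mem_zmultiples_zsmul_iff hv, zsmul_mem_zmultiples_zsmul_iff hv,
    natCast_zsmul, addOrderOf_mk_of_zmultiples_nsmul hv]
  norm_num
end

section
/- Let g ≥ 5 be an odd integer, set m = (g−1)/2, let F_g = ℤ^(1+2m) with standard basis e_0, e_1, …, e_m, f_1, …, f_m, and let R_g = (8g+4)·e_0 − Σ_{j=1}^{m} 2(j+1)(g−j)·e_j − Σ_{i=1}^{m} 4i(g−i)·f_i ∈ F_g. Then for every vector β ∈ F_g whose e_0-coordinate is zero, the element 4·((2g+1)·e_0 + β) does NOT lie in the subgroup ℤ·R_g generated by R_g; equivalently, the class of (2g+1)·e_0 + β in the quotient group A_g = F_g ⧸ (ℤ·R_g) is not annihilated by 4. -/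
/-!
A multiple `n • R_g` with `e₀`-coefficient `4(2g+1)` must be `R_g` itself, since the `e₀`-coefficient
of `R_g` is `8g+4`. So `R_g` would be divisible by `4`, but its `e₂`-coefficient `−6(g−2)` is not
when `g` is odd.
-/

/-- The free abelian group `F_g = ℤ^(1+2m)`, with coordinates
`(e₀-coefficient, (e₁,…,e_m)-coefficients, (f₁,…,f_m)-coefficients)`. -/
abbrev Fg (m : ℕ) : Type := ℤ × (Fin m → ℤ) × (Fin m → ℤ)

/-- The Cornalba–Harris relation vector
`R_g = (8g+4)·e₀ − Σ_{j=1}^m 2(j+1)(g−j)·e_j − Σ_{i=1}^m 4i(g−i)·f_i`,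
where the `Fin m`-index `k` corresponds to the index `k+1 ∈ {1,…,m}`. -/
def Rg (g m : ℕ) : Fg m :=
  ((8 * (g : ℤ) + 4),
   fun j => -(2 * (((j : ℕ) : ℤ) + 2) * ((g : ℤ) - (((j : ℕ) : ℤ) + 1))),
   fun i => -(4 * (((i : ℕ) : ℤ) + 1) * ((g : ℤ) - (((i : ℕ) : ℤ) + 1))))

lemma Rg_fst (g m : ℕ) : (Rg g m).1 = 4 * (2 * g + 1) := by
  simp only [Rg]
  ring

lemma four_smul_eq_Rg_of_mem_zmultiples {g m : ℕ} {x : Fg m} (hx : x.1 = 2 * g + 1)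
    (h : (4 : ℤ) • x ∈ AddSubgroup.zmultiples (Rg g m)) : (4 : ℤ) • x = Rg g m := by
  obtain ⟨n, hn⟩ := AddSubgroup.mem_zmultiples_iff.mp h
  have hfst : n * (4 * (2 * g + 1)) = 1 * (4 * (2 * g + 1)) := by
    simpa [Rg_fst, hx] using congrArg Prod.fst hn
  have hn_one : n = 1 := mul_right_cancel₀ (by positivity) hfst
  rw [← hn, hn_one, one_zsmul]

lemma not_four_dvd_Rg_coeff_e₂ {g m : ℕ} (hg : Odd g) (hm : 1 < m) :
    ¬ (4 : ℤ) ∣ (Rg g m).2.1 ⟨1, hm⟩ := by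
  obtain ⟨k, rfl⟩ := hg
  simp only [Rg]
  push_cast
  omega

/-- For odd `g ≥ 5` and any `β ∈ F_g` with vanishing `e₀`-coordinate, the element
`4·((2g+1)·e₀ + β)` does not lie in the subgroup generated by the
Cornalba–Harris relation `R_g` (with `m = (g−1)/2`). -/
theorem stmt_3 (g : ℕ) (hodd : Odd g) (hge : 5 ≤ g)
    (b₁ b₂ : Fin ((g - 1) / 2) → ℤ) :
    (4 : ℤ) • (((2 * (g : ℤ) + 1, b₁, b₂)) : Fg ((g - 1) / 2)) ∉
      AddSubgroup.zmultiples (Rg g ((g - 1) / 2)) := by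
  intro h
  have hm : 1 < (g - 1) / 2 := by omega
  apply not_four_dvd_Rg_coeff_e₂ hodd hm
  rw [← four_smul_eq_Rg_of_mem_zmultiples rfl h]
  exact ⟨b₁ ⟨1, hm⟩, rfl⟩
end

section
/- For every integer g ≥ 2, no odd prime p divides all the integers in the set S_g = {8g+4} ∪ {2(j+1)(g−j) : 1 ≤ j ≤ ⌊(g−1)/2⌋} ∪ {4i(g−i) : 1 ≤ i ≤ ⌊g/2⌋}; equivalently, the greatest common divisor of S_g is a power of 2. -/
/-!
Already `8g+4`, `4(g-1)` and `8(g-2)` (the terms `i = 1, 2` of the last family) have gcd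
dividing `4`, since `(8g+4) - 2·4(g-1) = 12` and `2·4(g-1) - 8(g-2) = 8`; for `g < 4`, where
`i = 2` is out of range, the first two alone suffice. So the gcd of `S_g` divides `2²`.
-/

/-- The set of coefficients of the Cornalba–Harris relation (with the `[Δ₀]`-term deleted):
`S_g = {8g+4} ∪ {2(j+1)(g−j) : 1 ≤ j ≤ ⌊(g−1)/2⌋} ∪ {4i(g−i) : 1 ≤ i ≤ ⌊g/2⌋}`. -/
def Sg (g : ℕ) : Finset ℕ :=
  insert (8 * g + 4)
    (((Finset.Icc 1 ((g - 1) / 2)).image fun j => 2 * (j + 1) * (g - j)) ∪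
     ((Finset.Icc 1 (g / 2)).image fun i => 4 * i * (g - i)))

lemma four_mul_mul_sub_mem_Sg {g i : ℕ} (h1 : 1 ≤ i) (h2 : i ≤ g / 2) :
    4 * i * (g - i) ∈ Sg g :=
  Finset.mem_insert_of_mem <| Finset.mem_union_right _ <|
    Finset.mem_image.mpr ⟨i, Finset.mem_Icc.mpr ⟨h1, h2⟩, rfl⟩

lemma gcd_Sg_dvd_four {g : ℕ} (hg : 2 ≤ g) : (Sg g).gcd id ∣ 4 := by
  set d := (Sg g).gcd id
  have h₀ : d ∣ 8 * g + 4 := Finset.gcd_dvd (Finset.mem_insert_self _ _)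
  have h₁ : d ∣ 4 * 1 * (g - 1) := Finset.gcd_dvd (four_mul_mul_sub_mem_Sg le_rfl (by omega))
  obtain hg4 | hg4 := lt_or_ge g 4
  · have h := Nat.dvd_gcd h₀ h₁
    interval_cases g <;> simpa using h
  · have h₂ : d ∣ 4 * 2 * (g - 2) :=
      Finset.gcd_dvd (four_mul_mul_sub_mem_Sg (by norm_num) (by omega))
    have h12 : d ∣ 12 := by
      have h := Nat.dvd_sub h₀ (h₁.mul_left 2)
      rwa [show 8 * g + 4 - 2 * (4 * 1 * (g - 1)) = 12 by omega] at h
    have h8 : d ∣ 8 := by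
      have h := Nat.dvd_sub (h₁.mul_left 2) h₂
      rwa [show 2 * (4 * 1 * (g - 1)) - 4 * 2 * (g - 2) = 8 by omega] at h
    simpa using Nat.dvd_gcd h12 h8

/-- For every `g ≥ 2`, no odd prime divides all elements of `S_g`; equivalently,
the greatest common divisor of `S_g` is a power of `2`. -/
theorem stmt_4 (g : ℕ) (hg : 2 ≤ g) :
    (∀ p : ℕ, p.Prime → Odd p → ∃ s ∈ Sg g, ¬ p ∣ s) ∧
    (∃ k : ℕ, (Sg g).gcd id = 2 ^ k) := by
  have hd : (Sg g).gcd id ∣ 2 ^ 2 := gcd_Sg_dvd_four hg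
  refine ⟨fun p hp hodd => ?_, ?_⟩
  · by_contra! h
    have hp2 : p ∣ 2 := hp.dvd_of_dvd_pow ((Finset.dvd_gcd h).trans hd)
    rw [(Nat.prime_dvd_prime_iff_eq hp Nat.prime_two).mp hp2] at hodd
    exact Nat.not_odd_iff_even.mpr even_two hodd
  · obtain ⟨k, -, hk⟩ := (Nat.dvd_prime_pow Nat.prime_two).mp hd
    exact ⟨k, hk⟩
end

section
/- Let g ≥ 5 be an odd integer, set m = (g−1)/2, let F_g = ℤ^(1+2m) with standard basis e_0, e_1, …, e_m, f_1, …, f_m, let R_g = (8g+4)·e_0 − Σ_{j=1}^{m} 2(j+1)(g−j)·e_j − Σ_{i=1}^{m} 4i(g−i)·f_i, and let A_g = F_g ⧸ (ℤ·R_g). Then every element a ∈ A_g with 4·a = 0 already satisfies 2·a = 0; in other words, A_g contains no element of order 4. -/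
theorem Int.dvd_of_sq_dvd_mul_of_not_sq_dvd {p : ℕ} (hp : p.Prime) {k c : ℤ}
    (hc : ¬ (p : ℤ) ^ 2 ∣ c) (hkc : (p : ℤ) ^ 2 ∣ k * c) : (p : ℤ) ∣ k := by
  by_contra hk
  have hcop : IsCoprime ((p : ℤ) ^ 2) k :=
    ((Prime.coprime_iff_not_dvd (Nat.prime_iff_prime_int.mp hp)).mpr hk).pow_left
  exact hc (hcop.dvd_of_dvd_mul_left hkc)

theorem QuotientAddGroup.nsmul_eq_zero_of_sq_nsmul_eq_zero {M : Type*} [AddCommGroup M]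
    [IsAddTorsionFree M] {p : ℕ} (hp : p.Prime) {r : M} (φ : M →+ ℤ) (hr : ¬ (p : ℤ) ^ 2 ∣ φ r)
    (a : M ⧸ AddSubgroup.zmultiples r) (ha : (p ^ 2) • a = 0) : p • a = 0 := by
  obtain ⟨x, rfl⟩ := QuotientAddGroup.mk_surjective a
  rw [← QuotientAddGroup.mk_nsmul, QuotientAddGroup.eq_zero_iff,
    AddSubgroup.mem_zmultiples_iff] at ha ⊢
  obtain ⟨k, hk⟩ := ha
  have hkr : (p : ℤ) ^ 2 ∣ k * φ r :=
    ⟨φ x, by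
      rw [← smul_eq_mul, ← map_zsmul, hk, map_nsmul, nsmul_eq_mul, mul_comm]
      push_cast
      ring⟩
  obtain ⟨l, rfl⟩ := Int.dvd_of_sq_dvd_mul_of_not_sq_dvd hp hr hkr
  refine ⟨l, nsmul_right_injective hp.ne_zero ?_⟩
  change p • l • r = p • p • x
  rw [← natCast_zsmul, smul_smul, hk, ← mul_nsmul, pow_two]

theorem not_four_dvd_Rg_e₂ {g m : ℕ} (hodd : Odd g) (j : Fin m) (hj : (j : ℕ) = 1) :
    ¬ ((2 : ℕ) : ℤ) ^ 2 ∣ (Rg g m).2.1 j := by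
  obtain ⟨t, rfl⟩ := hodd
  simp only [Rg, hj]
  push_cast
  omega

/-- For odd `g ≥ 5` and `m = (g−1)/2`, every element `a` of the quotient group
`A_g = F_g ⧸ ⟨R_g⟩` with `4·a = 0` already satisfies `2·a = 0`; i.e. `A_g` has
no element of order `4`. -/
theorem stmt_6 (g : ℕ) (hodd : Odd g) (hge : 5 ≤ g)
    (a : Fg ((g - 1) / 2) ⧸ AddSubgroup.zmultiples (Rg g ((g - 1) / 2))) :
    4 • a = 0 → 2 • a = 0 := by
  intro h4
  have hj : 1 < (g - 1) / 2 := by omega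
  let φ : Fg ((g - 1) / 2) →+ ℤ := (Pi.evalAddMonoidHom (fun _ => ℤ) ⟨1, hj⟩).comp
    ((AddMonoidHom.fst _ _).comp (AddMonoidHom.snd _ _))
  exact QuotientAddGroup.nsmul_eq_zero_of_sq_nsmul_eq_zero Nat.prime_two φ
    (not_four_dvd_Rg_e₂ hodd _ rfl) a h4
end

section
/- Let g ≥ 3 be an odd integer, set m = (g−1)/2, let F_g = ℤ^(1+2m) with standard basis e_0, e_1, …, e_m, f_1, …, f_m, let R_g = (8g+4)·e_0 − Σ_{j=1}^{m} 2(j+1)(g−j)·e_j − Σ_{i=1}^{m} 4i(g−i)·f_i, and let A_g = F_g ⧸ (ℤ·R_g). Then for every odd prime p, the group A_g contains no element of order p. -/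
open QuotientAddGroup

theorem addOrderOf_ne_of_not_dvd_apply {M : Type*} [AddCommGroup M] [IsAddTorsionFree M]
    {p : ℕ} (hp : p.Prime) {v : M} (φ : M →+ ℤ) (hφv : ¬ (p : ℤ) ∣ φ v)
    (a : M ⧸ AddSubgroup.zmultiples v) : addOrderOf a ≠ p := by
  induction a using QuotientAddGroup.induction_on with
  | H x =>
  intro hord
  have hpx : (p : ℤ) • x ∈ AddSubgroup.zmultiples v := by
    rw [← eq_zero_iff, natCast_zsmul, mk_nsmul, ← hord, addOrderOf_nsmul_eq_zero]
  obtain ⟨k, hk⟩ := AddSubgroup.mem_zmultiples_iff.mp hpx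
  have hpk : (p : ℤ) ∣ k := by
    have hφ : k * φ v = p * φ x := by simpa using congrArg φ hk
    exact ((Nat.prime_iff_prime_int.mp hp).dvd_mul.mp ⟨φ x, hφ⟩).resolve_right hφv
  obtain ⟨q, rfl⟩ := hpk
  have hx : q • v = x :=
    zsmul_right_injective (G := M) (n := (p : ℤ)) (by exact_mod_cast hp.ne_zero)
      (by rwa [mul_smul] at hk)
  have hx0 : (x : M ⧸ AddSubgroup.zmultiples v) = 0 := (eq_zero_iff x).mpr ⟨q, hx⟩
  rw [hx0, addOrderOf_zero] at hord
  exact hp.one_lt.ne hord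

def Fg.bezoutFunctional (m : ℕ) (hm : 0 < m) : Fg m →+ ℤ where
  toFun x := 4 * x.2.1 ⟨m - 1, by omega⟩ - (m + 2) * x.2.2 ⟨0, hm⟩
  map_zero' := by simp
  map_add' x y := by simp only [Prod.snd_add, Prod.fst_add, Pi.add_apply]; ring

theorem Fg.bezoutFunctional_Rg {g m : ℕ} (hg : g = 2 * m + 1) (hm : 0 < m) :
    Fg.bezoutFunctional m hm (Rg g m) = -8 := by
  subst hg
  simp only [bezoutFunctional, AddMonoidHom.coe_mk, ZeroHom.coe_mk, Rg]
  push_cast [Nat.cast_sub (Nat.one_le_iff_ne_zero.mpr hm.ne')]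
  ring

theorem not_natCast_dvd_neg_eight_of_odd {p : ℕ} (hp1 : p ≠ 1) (hpodd : Odd p) :
    ¬ (p : ℤ) ∣ -8 := by
  rw [Int.dvd_neg]
  norm_cast
  intro h8
  have hcop : p.Coprime (2 ^ 3) := (Nat.coprime_two_right.mpr hpodd).pow_right 3
  exact hp1 (Nat.Coprime.eq_one_of_dvd hcop h8)

/-- For odd `g ≥ 3`, `m = (g−1)/2`, and every odd prime `p`, the quotient group
`A_g = F_g ⧸ ⟨R_g⟩` contains no element of order `p`. -/
theorem stmt_7 (g : ℕ) (hodd : Odd g) (hge : 3 ≤ g) (p : ℕ) (hp : p.Prime) (hpodd : Odd p)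
    (a : Fg ((g - 1) / 2) ⧸ AddSubgroup.zmultiples (Rg g ((g - 1) / 2))) :
    addOrderOf a ≠ p := by
  have hg : g = 2 * ((g - 1) / 2) + 1 := by obtain ⟨t, rfl⟩ := hodd; omega
  have hm : 0 < (g - 1) / 2 := by omega
  refine addOrderOf_ne_of_not_dvd_apply hp (Fg.bezoutFunctional _ hm) ?_ a
  rw [Fg.bezoutFunctional_Rg hg hm]
  exact not_natCast_dvd_neg_eight_of_odd hp.ne_one hpodd
end
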